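/- Let G = [3^k] (the case l = m = 0), with k ≥ 1 and n = k + 1, acting on the (k+1)-dimensional space V = (ZMod p)^{k+1}, and let p ≥ 5 be prime with p | (k+2). Then the bilinear form on V is degenerate, and G^p is a proper subgroup of Ô_1(V), the subgroup of O(V) generated by all reflections r_a with a·a a nonzero square in ZMod p. -/

import Mathlib

/- Setup: the reduction mod an odd prime `p` of the `3`-infinity Coxeter group
`[3^k, ∞^l, 3^m]`, acting on `V = (ZMod p)^n` with `n = k + l + m + 1`. -/

namespace Statement13

/-- The Gram matrix of the basic system for `[3^k, ∞^l, 3^m]`, reduced mod `p`: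
diagonal entries `1`; the entry for the branch `{i−1, i}` is `−2⁻¹` if the branch is
labelled `3` (i.e. `1 ≤ i ≤ k` or `k+l+1 ≤ i ≤ n−1`) and `−1` if it is labelled `∞`
(i.e. `k+1 ≤ i ≤ k+l`); all other entries `0`. -/
def gram (p k l m : ℕ) : Matrix (Fin (k + l + m + 1)) (Fin (k + l + m + 1)) (ZMod p) :=
  fun i j =>
    if i = j then 1
    else if (j : ℕ) = (i : ℕ) + 1 then
      (if (j : ℕ) ≤ k ∨ k + l + 1 ≤ (j : ℕ) then -(2⁻¹ : ZMod p) else -1)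
    else if (i : ℕ) = (j : ℕ) + 1 then
      (if (i : ℕ) ≤ k ∨ k + l + 1 ≤ (i : ℕ) then -(2⁻¹ : ZMod p) else -1)
    else 0

/-- The corresponding symmetric bilinear form `x·y` on `V`. -/
def form (p k l m : ℕ) (x y : Fin (k + l + m + 1) → ZMod p) : ZMod p :=
  ∑ i, ∑ j, x i * gram p k l m i j * y j

/-- The general linear group of `V`. -/
abbrev GLV (p k l m : ℕ) := (Module.End (ZMod p) (Fin (k + l + m + 1) → ZMod p))ˣ

/-- `r i` is the generating reflection `r_i : x ↦ x − 2(x·b_i) b_i`. -/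
def ReflHyp (p k l m : ℕ) (r : Fin (k + l + m + 1) → GLV p k l m) : Prop :=
  ∀ i x, (r i).1 x =
    x - (2 * form p k l m x (Pi.single i 1)) •
      (Pi.single i 1 : Fin (k + l + m + 1) → ZMod p)

/-- The intersection property (string C-group condition). -/
def IsStringC (p k l m : ℕ) (r : Fin (k + l + m + 1) → GLV p k l m) : Prop :=
  ∀ I J : Set (Fin (k + l + m + 1)),
    Subgroup.closure (r '' I) ⊓ Subgroup.closure (r '' J) = Subgroup.closure (r '' (I ∩ J))

/-- `O₁(V)` (written `Ô₁(V)` when the form on `V` is degenerate): the subgroup of `O(V)`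
generated by all reflections `r_a : x ↦ x − 2((x·a)/(a·a)) a` with `a·a` a nonzero square. -/
def O1 (p k l m : ℕ) : Subgroup (GLV p k l m) :=
  Subgroup.closure {g | ∃ a : Fin (k + l + m + 1) → ZMod p,
    (∃ t : ZMod p, t ≠ 0 ∧ form p k l m a a = t ^ 2) ∧
    ∀ x, g.1 x = x - (2 * form p k l m x a * (form p k l m a a)⁻¹) • a}

/- The simple roots `e_i - e_{i+1}` of type `A_{k+1}` in `(ZMod p)^{k+2}`, with the standard dot
product, have Gram matrix `2 • gram`; so `x ↦ x ᵥ* simpleRoots` turns the form into half the dot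
product. In these coordinates `r_i` is the transposition of the coordinates `i` and `i + 1`, so
every element of `Gᵖ` preserves the set of coordinate values of every vector. When `p ∣ k + 2` the
vector `(1, 2, …, k+1)` has coordinates all equal to `1`, which is orthogonal to every root: it
lies in the radical. The vector `a = b₀ - b₁ + 2 b₂` has coordinates `(1, -2, 3, -2, 0, …)` and norm
`9 = 3²`, so `r_a ∈ Ô₁(V)`; but `r_a a = -a` has the coordinate `-1`, which `a` lacks once `p ≥ 5`. -/

open Matrix

lemma sub_smul_single_sub_single_eq_comp_swap {R ι : Type*} [Ring R] [DecidableEq ι]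
    (u : ι → R) {a b : ι} (hab : a ≠ b) :
    u - (u a - u b) • (Pi.single a 1 - Pi.single b 1) = u ∘ Equiv.swap a b := by
  funext t
  by_cases hta : t = a
  · subst hta; simp [hab]
  by_cases htb : t = b
  · subst htb; simp [Ne.symm hab]
  · simp [hta, htb, Equiv.swap_apply_of_ne_of_ne hta htb]

section SimpleRoots

variable (R : Type*) [Ring R] (k : ℕ)

def simpleRoots : Matrix (Fin (k + 1)) (Fin (k + 2)) R :=
  Matrix.of fun i => Pi.single i.castSucc 1 - Pi.single i.succ 1

variable {R k}

lemma single_vecMul_simpleRoots (i : Fin (k + 1)) :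
    Pi.single i 1 ᵥ* simpleRoots R k = Pi.single i.castSucc 1 - Pi.single i.succ 1 := by
  rw [single_one_vecMul]; rfl

lemma simpleRoots_mulVec_one : simpleRoots R k *ᵥ 1 = 0 := by
  funext i
  simp [mulVec, dotProduct, simpleRoots, Finset.sum_sub_distrib]

lemma vecMul_simpleRoots_of_potential (f : ℕ → R) (h0 : f 0 = 0) (hk : f (k + 2) = 0)
    (t : Fin (k + 2)) :
    ((fun i : Fin (k + 1) => f (i + 1)) ᵥ* simpleRoots R k) t = f (t + 1) - f t := by
  have hcs : ∑ i : Fin (k + 1), (if (t : ℕ) = i then f (i + 1) else 0) = f (t + 1) := by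
    rw [Fin.sum_univ_eq_sum_range (fun n => if (t : ℕ) = n then f (n + 1) else 0),
      Finset.sum_ite_eq]
    split_ifs with ht
    · rfl
    · rw [show (t : ℕ) = k + 1 by rw [Finset.mem_range] at ht; omega, hk]
  have hs : ∑ i : Fin (k + 1), (if (t : ℕ) = i + 1 then f (i + 1) else 0) = f t := by
    rw [Fin.sum_univ_eq_sum_range (fun n => if (t : ℕ) = n + 1 then f (n + 1) else 0)]
    have shift := Finset.sum_range_succ' (fun n => if (t : ℕ) = n then f n else 0) (k + 1)
    simp only [Finset.sum_ite_eq, Finset.mem_range, t.isLt, if_true, ite_self, h0,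
      add_zero] at shift
    exact shift.symm
  simp only [vecMul, dotProduct, simpleRoots, of_apply, Pi.sub_apply, Pi.single_apply, mul_sub,
    mul_ite, mul_one, mul_zero, Finset.sum_sub_distrib, Fin.ext_iff, Fin.val_castSucc, Fin.val_succ]
  rw [hcs, hs]

end SimpleRoots

variable {p k : ℕ}

lemma form_eq_dotProduct (x y : Fin (k + 1) → ZMod p) :
    form p k 0 0 x y = x ⬝ᵥ gram p k 0 0 *ᵥ y := by
  simp only [form, dotProduct, mulVec, Finset.mul_sum, mul_assoc]

lemma simpleRoots_mul_transpose [Fact p.Prime] (h2 : (2 : ZMod p) ≠ 0) :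
    simpleRoots (ZMod p) k * (simpleRoots (ZMod p) k)ᵀ = 2 • gram p k 0 0 := by
  ext i j
  have h2' : (2 : ZMod p) * 2⁻¹ = 1 := mul_inv_cancel₀ h2
  simp only [simpleRoots, mul_apply, of_apply, Pi.sub_apply, Pi.single_apply, transpose_apply,
    mul_sub, mul_ite, mul_one, mul_zero, Finset.sum_sub_distrib, Finset.sum_ite_eq',
    Finset.mem_univ, ↓reduceIte, Fin.castSucc_inj, Fin.succ_inj, Matrix.smul_apply, nsmul_eq_mul,
    Nat.cast_ofNat]
  simp only [gram, Fin.ext_iff, Fin.val_castSucc, Fin.val_succ]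
  split_ifs <;> first | omega | linear_combination h2' | linear_combination -h2' | ring

lemma two_mul_form [Fact p.Prime] (h2 : (2 : ZMod p) ≠ 0) (x y : Fin (k + 1) → ZMod p) :
    2 * form p k 0 0 x y = (x ᵥ* simpleRoots (ZMod p) k) ⬝ᵥ (y ᵥ* simpleRoots (ZMod p) k) := by
  rw [← dotProduct_mulVec, ← mulVec_transpose, mulVec_mulVec, simpleRoots_mul_transpose h2,
    smul_mulVec, dotProduct_smul, form_eq_dotProduct, nsmul_eq_mul, Nat.cast_ofNat]

lemma form_single_self [Fact p.Prime] (h2 : (2 : ZMod p) ≠ 0) (i : Fin (k + 1)) :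
    form p k 0 0 (Pi.single i 1) (Pi.single i 1) = 1 := by
  have h := two_mul_form h2 (Pi.single i 1) (Pi.single i 1)
  rw [single_vecMul_simpleRoots] at h
  simp only [dotProduct_sub, dotProduct_single, Pi.sub_apply, Pi.single_eq_same, ne_eq,
    Fin.castSucc_lt_succ.ne, not_false_eq_true, Pi.single_eq_of_ne, sub_zero, mul_one,
    Pi.single_eq_of_ne', zero_sub, sub_neg_eq_add] at h
  exact mul_left_cancel₀ h2 (h.trans (by ring))

lemma vecMul_simpleRoots_reflection [Fact p.Prime] (h2 : (2 : ZMod p) ≠ 0)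
    (x : Fin (k + 1) → ZMod p) (i : Fin (k + 1)) :
    (x - (2 * form p k 0 0 x (Pi.single i 1)) • Pi.single i 1) ᵥ* simpleRoots (ZMod p) k
      = (x ᵥ* simpleRoots (ZMod p) k) ∘ Equiv.swap i.castSucc i.succ := by
  rw [sub_vecMul, smul_vecMul, two_mul_form h2, single_vecMul_simpleRoots, dotProduct_sub,
    dotProduct_single, dotProduct_single, mul_one, mul_one]
  exact sub_smul_single_sub_single_eq_comp_swap _ Fin.castSucc_lt_succ.ne

lemma exists_reflection {l m : ℕ} [Fact p.Prime] {a : Fin (k + l + m + 1) → ZMod p}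
    (ha : form p k l m a a ≠ 0) :
    ∃ g : GLV p k l m, ∀ x, g.1 x = x - (2 * form p k l m x a * (form p k l m a a)⁻¹) • a := by
  set B := (Matrix.toLinearMap₂' (ZMod p) (S₁ := ZMod p) (S₂ := ZMod p) (gram p k l m)).flip a
  have hB : ∀ x, B x = form p k l m x a := fun x => by
    simp only [B, LinearMap.flip_apply, toLinearMap₂'_apply, form, smul_eq_mul]
    exact Finset.sum_congr rfl fun i _ => Finset.sum_congr rfl fun j _ => by ring
  have hf : ((2 * (form p k l m a a)⁻¹) • B) a = 2 := by
    rw [LinearMap.smul_apply, hB, smul_eq_mul, mul_assoc, inv_mul_cancel₀ ha, mul_one]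
  refine ⟨LinearMap.GeneralLinearGroup.ofLinearEquiv (Module.reflection hf), fun x => ?_⟩
  change Module.reflection hf x = _
  rw [Module.reflection_apply, LinearMap.smul_apply, hB, smul_eq_mul]
  module

variable (p k) in
def coordValuesStabilizer : Subgroup (GLV p k 0 0) where
  carrier := {g | ∀ x, Set.range (g.1 x ᵥ* simpleRoots (ZMod p) k)
    = Set.range (x ᵥ* simpleRoots (ZMod p) k)}
  mul_mem' {g h} hg hh x := by
    rw [Units.val_mul, Module.End.mul_apply, hg, hh]
  one_mem' x := rfl
  inv_mem' {g} hg x := by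
    rw [← hg, ← Module.End.mul_apply, ← Units.val_mul, mul_inv_cancel, Units.val_one,
      Module.End.one_apply]

lemma closure_le_coordValuesStabilizer [Fact p.Prime] (h2 : (2 : ZMod p) ≠ 0)
    {r : Fin (k + 0 + 0 + 1) → GLV p k 0 0} (hr : ReflHyp p k 0 0 r) :
    Subgroup.closure (Set.range r) ≤ coordValuesStabilizer p k := by
  rw [Subgroup.closure_le]
  rintro _ ⟨i, rfl⟩ x
  rw [hr, vecMul_simpleRoots_reflection h2, EquivLike.range_comp]

lemma closure_le_O1 [Fact p.Prime] (h2 : (2 : ZMod p) ≠ 0)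
    {r : Fin (k + 0 + 0 + 1) → GLV p k 0 0} (hr : ReflHyp p k 0 0 r) :
    Subgroup.closure (Set.range r) ≤ O1 p k 0 0 := by
  rw [Subgroup.closure_le]
  rintro _ ⟨i, rfl⟩
  refine Subgroup.subset_closure ⟨Pi.single i 1, ⟨1, one_ne_zero, ?_⟩, fun x => ?_⟩
  · rw [form_single_self h2, one_pow]
  · rw [hr, form_single_self h2, inv_one, mul_one]

variable (p k) in
def radicalVector : Fin (k + 1) → ZMod p := fun i => ((i + 1 : ℕ) : ZMod p)

lemma radicalVector_ne_zero [Fact p.Prime] : radicalVector p k ≠ 0 := fun h => by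
  simpa [radicalVector] using congrFun h 0

lemma radicalVector_vecMul_simpleRoots (hd : p ∣ k + 2) :
    radicalVector p k ᵥ* simpleRoots (ZMod p) k = 1 := by
  funext t
  refine (vecMul_simpleRoots_of_potential (fun n => (n : ZMod p)) Nat.cast_zero
    ((ZMod.natCast_eq_zero_iff _ _).2 hd) t).trans ?_
  simp

lemma form_radicalVector_left [Fact p.Prime] (h2 : (2 : ZMod p) ≠ 0) (hd : p ∣ k + 2)
    (y : Fin (k + 1) → ZMod p) : form p k 0 0 (radicalVector p k) y = 0 := by
  have h := two_mul_form h2 (radicalVector p k) y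
  rw [radicalVector_vecMul_simpleRoots hd, dotProduct_comm, ← dotProduct_mulVec,
    simpleRoots_mulVec_one, dotProduct_zero] at h
  exact (mul_eq_zero.1 h).resolve_left h2

variable (p) in
def extraRootPotential (n : ℕ) : ZMod p :=
  if n = 1 then 1 else if n = 2 then -1 else if n = 3 then 2 else 0

lemma extraRootPotential_of_four_le {n : ℕ} (hn : 4 ≤ n) : extraRootPotential p n = 0 := by
  rw [extraRootPotential, if_neg (by omega), if_neg (by omega), if_neg (by omega)]

variable (p k) in
def extraRoot : Fin (k + 1) → ZMod p := fun i => extraRootPotential p (i + 1)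

lemma extraRoot_vecMul_simpleRoots (hk : 2 ≤ k) (t : Fin (k + 2)) :
    (extraRoot p k ᵥ* simpleRoots (ZMod p) k) t
      = extraRootPotential p (t + 1) - extraRootPotential p t :=
  vecMul_simpleRoots_of_potential _ rfl (extraRootPotential_of_four_le (by omega)) t

lemma form_extraRoot_self [Fact p.Prime] (h2 : (2 : ZMod p) ≠ 0) (hk : 2 ≤ k) :
    form p k 0 0 (extraRoot p k) (extraRoot p k) = 3 ^ 2 := by
  have h := two_mul_form h2 (extraRoot p k) (extraRoot p k)
  simp only [dotProduct, extraRoot_vecMul_simpleRoots hk] at h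
  rw [Fin.sum_univ_eq_sum_range (fun n => (extraRootPotential p (n + 1) - extraRootPotential p n)
    * (extraRootPotential p (n + 1) - extraRootPotential p n)),
    ← Finset.sum_range_add_sum_Ico _ (show 4 ≤ k + 2 by omega),
    Finset.sum_eq_zero (s := Finset.Ico 4 (k + 2)) fun n hn => by
      rw [extraRootPotential_of_four_le (by linarith [(Finset.mem_Ico.1 hn).1]),
        extraRootPotential_of_four_le (Finset.mem_Ico.1 hn).1, sub_zero, mul_zero]] at h
  refine mul_left_cancel₀ h2 (h.trans ?_)
  norm_num [Finset.sum_range_succ, extraRootPotential]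

lemma neg_one_notMem_range_extraRoot_vecMul_simpleRoots [Fact p.Prime] (h2 : (2 : ZMod p) ≠ 0)
    (hk : 2 ≤ k) : -1 ∉ Set.range (extraRoot p k ᵥ* simpleRoots (ZMod p) k) := by
  rintro ⟨t, ht⟩
  rw [extraRoot_vecMul_simpleRoots hk] at ht
  have h4 : (4 : ZMod p) ≠ 0 := by
    simpa [show (4 : ZMod p) = 2 * 2 by norm_num] using mul_ne_zero h2 h2
  obtain h | h | h | h | h :
      (t : ℕ) = 0 ∨ (t : ℕ) = 1 ∨ (t : ℕ) = 2 ∨ (t : ℕ) = 3 ∨ 4 ≤ (t : ℕ) := by omega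
  · norm_num [h, extraRootPotential] at ht
    exact h2 (by linear_combination ht)
  · norm_num [h, extraRootPotential] at ht
    exact one_ne_zero (by linear_combination ht)
  · norm_num [h, extraRootPotential] at ht
    exact h4 (by linear_combination ht)
  · norm_num [h, extraRootPotential] at ht
    exact one_ne_zero (by linear_combination ht)
  · rw [extraRootPotential_of_four_le h, extraRootPotential_of_four_le (by omega)] at ht
    exact one_ne_zero (by linear_combination ht)

lemma reflection_extraRoot_notMem_coordValuesStabilizer [Fact p.Prime] (h2 : (2 : ZMod p) ≠ 0)
    (h3 : (3 : ZMod p) ≠ 0) (hk : 2 ≤ k) {g : GLV p k 0 0}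
    (hg : ∀ x, g.1 x = x - (2 * form p k 0 0 x (extraRoot p k)
      * (form p k 0 0 (extraRoot p k) (extraRoot p k))⁻¹) • extraRoot p k) :
    g ∉ coordValuesStabilizer p k := by
  intro hmem
  have hneg : g.1 (extraRoot p k) = -extraRoot p k := by
    rw [hg, mul_assoc, mul_inv_cancel₀ (form_extraRoot_self h2 hk ▸ pow_ne_zero 2 h3)]
    module
  apply neg_one_notMem_range_extraRoot_vecMul_simpleRoots h2 hk
  rw [← hmem (extraRoot p k), hneg, neg_vecMul]
  refine ⟨0, ?_⟩
  rw [Pi.neg_apply, extraRoot_vecMul_simpleRoots hk]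
  norm_num [extraRootPotential]

theorem statement13_general (p k : ℕ) (hp : p.Prime) (hp5 : 5 ≤ p)
    (hd : p ∣ (k + 2))
    (r : Fin (k + 0 + 0 + 1) → GLV p k 0 0) (hr : ReflHyp p k 0 0 r) :
    (∃ c : Fin (k + 0 + 0 + 1) → ZMod p, c ≠ 0 ∧ ∀ y, form p k 0 0 c y = 0) ∧
    Subgroup.closure (Set.range r) < O1 p k 0 0 := by
  have : Fact p.Prime := ⟨hp⟩
  have hk : 2 ≤ k := by have := Nat.le_of_dvd (by omega) hd; omega
  have hsmall : ∀ n : ℕ, 0 < n → n < 5 → (n : ZMod p) ≠ 0 := fun n hn0 hn5 hn =>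
    absurd (Nat.le_of_dvd hn0 ((ZMod.natCast_eq_zero_iff n p).1 hn)) (by omega)
  have h2 : (2 : ZMod p) ≠ 0 := by exact_mod_cast hsmall 2 (by omega) (by omega)
  have h3 : (3 : ZMod p) ≠ 0 := by exact_mod_cast hsmall 3 (by omega) (by omega)
  refine ⟨⟨radicalVector p k, radicalVector_ne_zero, form_radicalVector_left h2 hd⟩, ?_⟩
  have hnorm := form_extraRoot_self h2 hk
  obtain ⟨g, hg⟩ := exists_reflection (hnorm ▸ pow_ne_zero 2 h3)
  refine SetLike.lt_iff_le_and_exists.2 ⟨closure_le_O1 h2 hr, g, ?_, fun hmem => ?_⟩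
  · exact Subgroup.subset_closure ⟨extraRoot p k, ⟨3, h3, hnorm⟩, hg⟩
  · exact reflection_extraRoot_notMem_coordValuesStabilizer h2 h3 hk hg
      (closure_le_coordValuesStabilizer h2 hr hmem)

/-- for `G = [3^k]` on `V = (ZMod p)^{k+1}` with `p ≥ 5` and `p ∣ (k+2)`,
the form is degenerate and `Gᵖ` is a proper subgroup of `Ô₁(V)`. -/
theorem statement13 (p k : ℕ) (hp : p.Prime) (hp5 : 5 ≤ p) (hk : 1 ≤ k)
    (hd : p ∣ (k + 2))
    (r : Fin (k + 0 + 0 + 1) → GLV p k 0 0) (hr : ReflHyp p k 0 0 r) :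
    (∃ c : Fin (k + 0 + 0 + 1) → ZMod p, c ≠ 0 ∧ ∀ y, form p k 0 0 c y = 0) ∧
    Subgroup.closure (Set.range r) < O1 p k 0 0 :=
  statement13_general p k hp hp5 hd r hr

end Statement13
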